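/- For all integers s ≥ 1, L ≥ 3, r ≥ 0 and k₁ > k₂ ≥ 1, define e_{k₁,r}(n) and d_{k₂}(n) by ∑_{n≥0} e_{k₁,r}(n) q^n = q^r(1 − q^{k₁})/(q^s;q)_{L+1} and ∑_{n≥0} d_{k₂}(n) q^n = (1 − q^{k₂})/(q^s;q)_{L+1} in ℤ[[q]]. Then e_{k₁,r}(n) − d_{k₂}(n) ~ (k₁ − k₂)·n^{L−1} / ((L−1)!·s·(s+1)···(s+L)) as n → ∞; that is, (e_{k₁,r}(n) − d_{k₂}(n))·(L−1)!·s·(s+1)···(s+L)/((k₁−k₂)·n^{L−1}) tends to 1 as n → ∞. -/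

import Mathlib

open PowerSeries

open Filter Finset Asymptotics

private lemma pow_succ_sub_le (m : ℕ) (u : ℝ) (hu : 0 ≤ u) :
    (m+1 : ℝ) * u ^ m ≤ (u+1) ^ (m+1) - u ^ (m+1) ∧
    (u+1) ^ (m+1) - u ^ (m+1) ≤ (m+1 : ℝ) * (u+1) ^ m := by
  have h := geom_sum₂_mul (u+1) u (m+1)
  simp only [add_sub_cancel_left, mul_one] at h
  rw [← h]
  constructor
  · calc (m+1 : ℝ) * u ^ m = ∑ _i ∈ range (m+1), u ^ m := by
          simp [mul_comm]
      _ ≤ ∑ i ∈ range (m+1), (u+1) ^ i * u ^ (m - i) := by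
          apply sum_le_sum
          intro i hi
          simp only [mem_range] at hi
          calc u ^ m = u ^ i * u ^ (m - i) := by
                rw [← pow_add]; congr 1; omega
            _ ≤ (u+1) ^ i * u ^ (m - i) := by
                apply mul_le_mul_of_nonneg_right _ (by positivity)
                exact pow_le_pow_left₀ hu (by linarith) i
  · calc ∑ i ∈ range (m+1), (u+1) ^ i * u ^ (m - i)
        ≤ ∑ _i ∈ range (m+1), (u+1) ^ m := by
          apply sum_le_sum
          intro i hi
          simp only [mem_range] at hi
          calc (u+1) ^ i * u ^ (m - i) ≤ (u+1) ^ i * (u+1) ^ (m - i) := by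
                apply mul_le_mul_of_nonneg_left _ (by positivity)
                exact pow_le_pow_left₀ hu (by linarith) _
            _ = (u+1) ^ m := by rw [← pow_add]; congr 1; omega
      _ = (m+1 : ℝ) * (u+1) ^ m := by simp [mul_comm]

private lemma sum_pow_ub (m t : ℕ) :
    ∑ u ∈ range t, (u : ℝ) ^ m ≤ (t : ℝ) ^ (m+1) / (m+1) := by
  rw [le_div_iff₀ (by positivity), mul_comm]
  calc (m+1 : ℝ) * ∑ u ∈ range t, (u : ℝ) ^ m
      = ∑ u ∈ range t, (m+1 : ℝ) * (u : ℝ) ^ m := by rw [mul_sum]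
    _ ≤ ∑ u ∈ range t, (((u : ℝ)+1) ^ (m+1) - (u : ℝ) ^ (m+1)) :=
        sum_le_sum fun u _ => (pow_succ_sub_le m u (by positivity)).1
    _ = (t : ℝ) ^ (m+1) - 0 ^ (m+1) := by
        have := Finset.sum_range_sub (fun u => ((u : ℝ)) ^ (m+1)) t
        simpa [Nat.cast_succ] using this
    _ ≤ (t : ℝ) ^ (m+1) := by simp [zero_pow, Nat.succ_ne_zero]

private lemma sum_pow_lb (m t : ℕ) :
    (t : ℝ) ^ (m+1) / (m+1) - (t : ℝ) ^ m ≤ ∑ u ∈ range t, (u : ℝ) ^ m := by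
  rw [sub_le_iff_le_add, div_le_iff₀ (by positivity)]
  calc (t : ℝ) ^ (m+1) = (t : ℝ) ^ (m+1) - 0 ^ (m+1) := by
        simp [zero_pow, Nat.succ_ne_zero]
    _ = ∑ u ∈ range t, (((u : ℝ)+1) ^ (m+1) - (u : ℝ) ^ (m+1)) := by
        have := Finset.sum_range_sub (fun u => ((u : ℝ)) ^ (m+1)) t
        simpa [Nat.cast_succ] using this.symm
    _ ≤ ∑ u ∈ range t, (m+1 : ℝ) * ((u : ℝ)+1) ^ m :=
        sum_le_sum fun u _ => (pow_succ_sub_le m u (by positivity)).2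
    _ = (m+1 : ℝ) * ∑ u ∈ range t, ((u : ℝ)+1) ^ m := by rw [mul_sum]
    _ ≤ (m+1 : ℝ) * ((∑ u ∈ range t, (u : ℝ) ^ m + (t:ℝ) ^ m)) := by
        have h1 : ∑ u ∈ range t, ((u : ℝ)+1) ^ m
            = ∑ u ∈ range (t+1), (u : ℝ) ^ m - 0 ^ m := by
          rw [Finset.sum_range_succ' (fun u => (u:ℝ)^m) t]
          push_cast; ring
        have h2 : ∑ u ∈ range (t+1), (u : ℝ) ^ m
            = ∑ u ∈ range t, (u : ℝ) ^ m + (t:ℝ) ^ m := Finset.sum_range_succ _ _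
        rw [h1, h2]
        have : (0:ℝ) ≤ (0:ℝ) ^ m := by positivity
        nlinarith [this]
    _ = (∑ u ∈ range t, (u : ℝ) ^ m + (t:ℝ) ^ m) * (m+1 : ℝ) := by ring

private lemma tendsto_sum_pow_div (m : ℕ) :
    Filter.Tendsto (fun t : ℕ => (∑ u ∈ range t, (u : ℝ) ^ m) / (t : ℝ) ^ (m+1))
      atTop (nhds (1 / (m+1))) := by
  have h1 : Filter.Tendsto (fun t : ℕ => 1/(m+1) - (t:ℝ)^m / (t:ℝ)^(m+1)) atTop
      (nhds (1/(m+1))) := by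
    have := tendsto_pow_div_pow_atTop_zero (𝕜 := ℝ) (p := m) (q := m+1) (by omega)
    have h2 := (this.comp tendsto_natCast_atTop_atTop (α := ℕ))
    simpa using (tendsto_const_nhds (x := (1:ℝ)/(m+1)) (f := atTop)).sub h2
  have h3 : Filter.Tendsto (fun _t : ℕ => 1/(m+1) : ℕ → ℝ) atTop (nhds (1/(m+1))) :=
    tendsto_const_nhds
  apply tendsto_of_tendsto_of_tendsto_of_le_of_le' h1 h3
  · filter_upwards [eventually_gt_atTop 0] with t ht
    have hp : (0:ℝ) < (t:ℝ)^(m+1) := by positivity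
    have h4 : ((t:ℝ)^(m+1)/(m+1) - (t:ℝ)^m) / (t:ℝ)^(m+1) ≤
        (∑ u ∈ range t, (u : ℝ) ^ m) / (t : ℝ) ^ (m+1) := by
      have := sum_pow_lb m t
      gcongr
    calc 1/(m+1:ℝ) - (t:ℝ)^m / (t:ℝ)^(m+1)
        = ((t:ℝ)^(m+1)/(m+1) - (t:ℝ)^m) / (t:ℝ)^(m+1) := by
          field_simp
      _ ≤ _ := h4
  · filter_upwards [eventually_gt_atTop 0] with t ht
    have hp : (0:ℝ) < (t:ℝ)^(m+1) := by positivity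
    rw [div_le_div_iff₀ hp (by positivity : (0:ℝ) < (m+1:ℝ))]
    calc (∑ u ∈ range t, (u : ℝ) ^ m) * (m+1:ℝ)
        ≤ ((t : ℝ) ^ (m+1) / (m+1)) * (m+1:ℝ) := by
          have := sum_pow_ub m t
          nlinarith
      _ = 1 * (t:ℝ)^(m+1) := by field_simp

private lemma sum_pow_tendsto_atTop (m : ℕ) :
    Filter.Tendsto (fun t : ℕ => ∑ u ∈ range t, (u : ℝ) ^ m) atTop atTop := by
  apply Filter.tendsto_atTop_mono' atTop
    (show ∀ᶠ t : ℕ in atTop, ((t:ℝ) - (m+1))/(m+1) ≤ ∑ u ∈ range t, (u : ℝ) ^ m from ?_)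
    ?_
  · filter_upwards [eventually_ge_atTop (m+1)] with t ht
    have h1 : (m+1 : ℝ) ≤ (t:ℝ) := by exact_mod_cast ht
    have h2 : (1:ℝ) ≤ (t:ℝ)^m := one_le_pow₀ (by linarith)
    refine le_trans ?_ (sum_pow_lb m t)
    rw [div_le_iff₀ (by positivity : (0:ℝ) < (m+1:ℝ)), sub_mul, div_mul_cancel₀ _
      (by positivity : (m+1:ℝ) ≠ 0)]
    have : (t:ℝ)^(m+1) = (t:ℝ)^m * (t:ℝ) := by ring
    nlinarith [h2, h1]
  · apply Filter.Tendsto.atTop_div_const (by positivity : (0:ℝ) < (m+1:ℝ))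
    exact Filter.tendsto_atTop_add_const_right _ _ tendsto_natCast_atTop_atTop

private lemma wCesaro (m : ℕ) {a : ℕ → ℝ} {α : ℝ} (h : Filter.Tendsto a atTop (nhds α)) :
    Filter.Tendsto (fun t : ℕ => (∑ u ∈ range t, a u * (u:ℝ)^m) / (t:ℝ)^(m+1))
      atTop (nhds (α/(m+1))) := by
  have hlo : (fun u : ℕ => a u - α) =o[atTop] (fun _ : ℕ => (1:ℝ)) :=
    (isLittleO_one_iff ℝ).2 (by simpa using h.sub_const α)
  have h2 : (fun u : ℕ => (a u - α) * (u:ℝ)^m) =o[atTop] (fun u : ℕ => (u:ℝ)^m) := by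
    simpa using hlo.mul_isBigO (isBigO_refl (fun u : ℕ => (u:ℝ)^m) atTop)
  have h3 := h2.sum_range (fun i => by positivity) (sum_pow_tendsto_atTop m)
  have hO : (fun t : ℕ => ∑ u ∈ range t, (u:ℝ)^m) =O[atTop] (fun t : ℕ => (t:ℝ)^(m+1)) := by
    apply IsBigO.of_bound (1/(m+1))
    filter_upwards with t
    have h5 := sum_pow_ub m t
    have h6 : (0:ℝ) ≤ ∑ u ∈ range t, (u:ℝ)^m := by positivity
    rw [Real.norm_of_nonneg h6, Real.norm_of_nonneg (by positivity)]
    calc ∑ u ∈ range t, (u:ℝ)^m ≤ (t:ℝ)^(m+1)/(m+1) := h5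
      _ = 1/(m+1) * (t:ℝ)^(m+1) := by ring
  have h4 := (h3.trans_isBigO hO).tendsto_div_nhds_zero
  have hS := (tendsto_sum_pow_div m).const_mul α
  have h7 := h4.add hS
  have hval : (0:ℝ) + α*(1/(m+1)) = α/(m+1) := by ring
  rw [hval] at h7
  apply h7.congr'
  filter_upwards with t
  have hsub : ∑ i ∈ range t, (a i - α)*(i:ℝ)^m
      = ∑ i ∈ range t, a i*(i:ℝ)^m - α * ∑ i ∈ range t, (i:ℝ)^m := by
    simp [sub_mul, sum_sub_distrib, mul_sum]
  rw [← mul_div_assoc, ← add_div, hsub]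
  ring_nf

private lemma residue_combine (f : ℕ → ℝ) (l : ℝ) (d : ℕ) (hd : 0 < d)
    (h : ∀ r < d, Filter.Tendsto (fun t => f (r + t * d)) atTop (nhds l)) :
    Filter.Tendsto f atTop (nhds l) := by
  rw [Metric.tendsto_atTop]
  intro ε hε
  have hN : ∀ r, r < d → ∃ N, ∀ t ≥ N, dist (f (r + t * d)) l < ε := by
    intro r hr
    exact (Metric.tendsto_atTop.1 (h r hr)) ε hε
  choose! N hNs using hN
  refine ⟨d * (1 + Finset.sup (Finset.range d) N), fun n hn => ?_⟩
  have hr : n % d < d := Nat.mod_lt _ hd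
  have hform : n % d + (n / d) * d = n := Nat.mod_add_div' n d
  have ht : N (n % d) ≤ n / d := by
    have h1 : N (n % d) ≤ Finset.sup (Finset.range d) N :=
      Finset.le_sup (Finset.mem_range.2 hr)
    have h2 : 1 + Finset.sup (Finset.range d) N ≤ n / d :=
      (Nat.le_div_iff_mul_le hd).2 (by rwa [mul_comm])
    omega
  have := hNs (n % d) hr (n / d) ht
  rwa [hform] at this

private lemma ratio_tendsto (a b c e : ℝ) (hc : c ≠ 0) :
    Filter.Tendsto (fun t : ℕ => ((t:ℝ)*a+b)/((t:ℝ)*c+e)) atTop (nhds (a/c)) := by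
  have h1 : Filter.Tendsto (fun t : ℕ => a + b/(t:ℝ)) atTop (nhds a) := by
    simpa using (tendsto_const_nhds (x := a) (f := atTop (α := ℕ))).add
      (tendsto_const_div_atTop_nhds_zero_nat b)
  have h2 : Filter.Tendsto (fun t : ℕ => c + e/(t:ℝ)) atTop (nhds c) := by
    simpa using (tendsto_const_nhds (x := c) (f := atTop (α := ℕ))).add
      (tendsto_const_div_atTop_nhds_zero_nat e)
  apply (h1.div h2 hc).congr'
  filter_upwards [eventually_gt_atTop 0] with t ht
  have htR : (t:ℝ) ≠ 0 := by positivity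
  show (a + b/(t:ℝ)) / (c + e/(t:ℝ)) = _
  have e1 : a + b/(t:ℝ) = ((t:ℝ)*a+b)/(t:ℝ) := by field_simp
  have e2 : c + e/(t:ℝ) = ((t:ℝ)*c+e)/(t:ℝ) := by field_simp
  rw [e1, e2, div_div_div_cancel_right₀ htR]

private lemma stolz_step (x y : ℕ → ℝ) (d m : ℕ) (hd : 0 < d) (α : ℝ)
    (hrec : ∀ n, d ≤ n → x n = y n + x (n - d))
    (hy : Filter.Tendsto (fun n : ℕ => y n / (n:ℝ)^m) atTop (nhds α)) :
    Filter.Tendsto (fun n : ℕ => x n / (n:ℝ)^(m+1)) atTop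
      (nhds (α/((m+1)*d))) := by
  apply residue_combine _ _ d hd
  intro r hr
  set b : ℕ → ℝ := fun u => if u = 0 then 0 else y (r + u*d) / (u:ℝ)^m with hbdef
  have key : ∀ t, x (r + t*d) = x r + ∑ u ∈ Finset.range (t+1), b u * (u:ℝ)^m := by
    intro t
    induction t with
    | zero => simp [hbdef]
    | succ t ih =>
      have hge : d ≤ r + (t+1)*d := by
        have : d ≤ (t+1)*d := Nat.le_mul_of_pos_left d t.succ_pos
        omega
      have hsub : r + (t+1)*d - d = r + t*d := by
        have : (t+1)*d = t*d + d := by ring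
        omega
      rw [hrec _ hge, hsub, ih, Finset.sum_range_succ (fun u => b u * (u:ℝ)^m) (t+1)]
      have hb1 : b (t+1) * ((t+1:ℕ):ℝ)^m = y (r + (t+1)*d) := by
        rw [hbdef]
        simp only [Nat.succ_ne_zero, if_false]
        rw [div_mul_cancel₀]
        positivity
      rw [hb1]
      ring
  have hb : Filter.Tendsto b atTop (nhds (α * (d:ℝ)^m)) := by
    have hcomp : Filter.Tendsto (fun u : ℕ => r + u*d) atTop atTop := by
      apply Filter.tendsto_atTop_mono (fun u => ?_) Filter.tendsto_id
      have h6 := Nat.mul_le_mul_left u hd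
      simp only [id_eq]
      omega
    have h1 : Filter.Tendsto (fun u : ℕ => y (r + u*d) / ((r + u*d : ℕ):ℝ)^m)
        atTop (nhds α) := hy.comp hcomp
    have h4 : Filter.Tendsto (fun u : ℕ => ((r + u*d : ℕ):ℝ)/(u:ℝ)) atTop
        (nhds (d:ℝ)) := by
      have h3 : Filter.Tendsto (fun u : ℕ => ((u:ℝ)*(d:ℝ)+(r:ℝ))/((u:ℝ)*1+0)) atTop
          (nhds ((d:ℝ)/1)) := ratio_tendsto (d:ℝ) (r:ℝ) 1 0 one_ne_zero
      rw [div_one] at h3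
      apply h3.congr'
      filter_upwards with u
      push_cast
      ring_nf
    have h2 : Filter.Tendsto (fun u : ℕ => (((r + u*d : ℕ):ℝ)/(u:ℝ))^m) atTop
        (nhds ((d:ℝ)^m)) := h4.pow m
    have h5 := h1.mul h2
    apply h5.congr'
    filter_upwards [eventually_gt_atTop 0] with u hu
    have hu0 : ((u:ℝ)) ≠ 0 := by positivity
    have hrud : (((r + u*d : ℕ)):ℝ) ≠ 0 := by
      have h7 : d ≤ u * d := Nat.le_mul_of_pos_left d hu
      have : 0 < r + u*d := by omega
      positivity
    show _ = b u
    rw [hbdef]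
    simp only [Nat.pos_iff_ne_zero.1 hu, if_false]
    rw [div_pow, div_mul_div_comm, mul_comm (y _), mul_div_mul_left _ _ (pow_ne_zero m hrud)]
  -- sum limit
  have hsum := wCesaro m hb
  have hsum1 := hsum.comp (tendsto_add_atTop_nat 1)
  have hdenpos : ∀ t : ℕ, (0:ℝ) < ((t:ℝ)+1)^(m+1) := fun t => by positivity
  have hdentop : Filter.Tendsto (fun t : ℕ => ((t:ℝ)+1)^(m+1)) atTop atTop := by
    apply Filter.tendsto_atTop_mono (fun t => ?_)
      (tendsto_atTop_add_const_right atTop (1:ℝ) tendsto_natCast_atTop_atTop)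
    have h0 : (0:ℝ) ≤ (t:ℝ) := Nat.cast_nonneg t
    exact le_self_pow₀ (by linarith) (Nat.succ_ne_zero m)
  have hx0 : Filter.Tendsto (fun t : ℕ => x r / ((t:ℝ)+1)^(m+1)) atTop (nhds 0) :=
    Filter.Tendsto.div_atTop tendsto_const_nhds hdentop
  have hmain : Filter.Tendsto (fun t : ℕ => x (r + t*d) / ((t:ℝ)+1)^(m+1)) atTop
      (nhds (α * (d:ℝ)^m / (m+1))) := by
    have h8 := hx0.add hsum1
    rw [zero_add] at h8
    apply h8.congr'
    filter_upwards with t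
    show x r / ((t:ℝ)+1)^(m+1) + _ = _
    rw [key t]
    have : (((t+1:ℕ)):ℝ) = (t:ℝ)+1 := by push_cast; ring
    simp only [Function.comp_apply, this]
    rw [add_div]
  have hrat : Filter.Tendsto (fun t : ℕ => (((t:ℝ)+1)/((r + t*d : ℕ):ℝ))^(m+1)) atTop
      (nhds ((1/(d:ℝ))^(m+1))) := by
    have h3 : Filter.Tendsto (fun t : ℕ => ((t:ℝ)*1+1)/((t:ℝ)*(d:ℝ)+(r:ℝ))) atTop
        (nhds (1/(d:ℝ))) := ratio_tendsto 1 1 (d:ℝ) (r:ℝ) (by positivity)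
    apply Filter.Tendsto.pow _ (m+1)
    apply h3.congr'
    filter_upwards with t
    push_cast
    ring_nf
  have hfin := hmain.mul hrat
  have hval : α * (d:ℝ)^m / (m+1) * ((1/(d:ℝ))^(m+1)) = α/((m+1)*d) := by
    have hd0 : ((d:ℝ)) ≠ 0 := by positivity
    rw [one_div, inv_pow, pow_succ]
    field_simp
  rw [hval] at hfin
  apply hfin.congr'
  filter_upwards [eventually_gt_atTop 0] with t ht
  have hrud : (((r + t*d : ℕ)):ℝ) ≠ 0 := by
    have h7 : d ≤ t * d := Nat.le_mul_of_pos_left d ht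
    have : 0 < r + t*d := by omega
    positivity
  show x (r + t*d) / ((t:ℝ)+1)^(m+1) * (((t:ℝ)+1)/((r + t*d : ℕ):ℝ))^(m+1)
      = x (r + t*d) / ((r + t*d : ℕ):ℝ)^(m+1)
  rw [div_pow, div_mul_div_comm, mul_comm (x _), mul_div_mul_left _ _
    (pow_ne_zero (m+1) (by positivity : ((t:ℝ)+1) ≠ 0))]

open PowerSeries

private noncomputable def Sd (d : ℕ) : PowerSeries ℤ :=
  PowerSeries.mk fun n => if d ∣ n then 1 else 0

private lemma Sd_eq (d : ℕ) (hd : 0 < d) : (1 - X^d : PowerSeries ℤ) * Sd d = 1 := by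
  ext n
  rw [sub_mul, one_mul, map_sub, coeff_X_pow_mul']
  rcases Nat.eq_zero_or_pos n with h0 | hpos
  · subst h0
    simp [Sd, Nat.pos_iff_ne_zero.1 hd]
  · rw [coeff_one, if_neg (Nat.pos_iff_ne_zero.1 hpos)]
    by_cases hle : d ≤ n
    · rw [if_pos hle]
      have : d ∣ n ↔ d ∣ n - d := by
        constructor
        · intro h; exact (Nat.dvd_sub h dvd_rfl)
        · intro h; have := Nat.dvd_add h (dvd_refl d); rwa [Nat.sub_add_cancel hle] at this
      simp only [Sd, coeff_mk]
      rw [if_congr this rfl rfl]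
      ring
    · rw [if_neg hle]
      have : ¬ d ∣ n := fun h => hle (Nat.le_of_dvd hpos h)
      simp [Sd, this]

private lemma Sd_isUnit (d : ℕ) (hd : 0 < d) : IsUnit (1 - X^d : PowerSeries ℤ) :=
  IsUnit.of_mul_eq_one _ (Sd_eq d hd)

private lemma Sd_rec (d : ℕ) (hd : 0 < d) (C : PowerSeries ℤ) (n : ℕ) (hn : d ≤ n) :
    coeff n (Sd d * C) = coeff n C + coeff (n - d) (Sd d * C) := by
  have h : Sd d * C = C + X^d * (Sd d * C) := by
    have h1 := Sd_eq d hd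
    have h2 : (1 - X^d : PowerSeries ℤ) * (Sd d * C) = C := by
      rw [← mul_assoc, h1, one_mul]
    rw [sub_mul, one_mul, sub_eq_iff_eq_add] at h2
    exact h2
  conv_lhs => rw [h]
  rw [map_add, coeff_X_pow_mul', if_pos hn]

private lemma prod_step {C : PowerSeries ℤ} {m : ℕ} {α : ℝ} (d : ℕ) (hd : 0 < d)
    (hC : Filter.Tendsto (fun n : ℕ => ((coeff n C : ℤ) : ℝ) / (n:ℝ)^m) atTop (nhds α)) :
    Filter.Tendsto (fun n : ℕ => ((coeff n (Sd d * C) : ℤ) : ℝ) / (n:ℝ)^(m+1)) atTop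
      (nhds (α/((m+1)*d))) := by
  apply stolz_step _ (fun n => ((coeff n C : ℤ) : ℝ)) d m hd α _ hC
  intro n hn
  have h9 := Sd_rec d hd C n hn
  show ((coeff n (Sd d * C) : ℤ) : ℝ) = _
  rw [h9]
  push_cast
  ring

private lemma natdiv_tendsto (a c : ℕ) (ha : 0 < a) :
    Filter.Tendsto (fun n : ℕ => (((n - c)/a : ℕ) : ℝ) / (n:ℝ)) atTop
      (nhds (1/(a:ℝ))) := by
  have hlow : Filter.Tendsto (fun n : ℕ => ((n:ℝ)*1 - ((c:ℝ)+(a:ℝ)))/((n:ℝ)*(a:ℝ)+0))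
      atTop (nhds (1/(a:ℝ))) := by
    have := ratio_tendsto 1 (-((c:ℝ)+(a:ℝ))) (a:ℝ) 0 (by positivity)
    apply this.congr
    intro n
    ring_nf
  have hup : Filter.Tendsto (fun n : ℕ => ((n:ℝ)*1 - (c:ℝ))/((n:ℝ)*(a:ℝ)+0))
      atTop (nhds (1/(a:ℝ))) := by
    have := ratio_tendsto 1 (-(c:ℝ)) (a:ℝ) 0 (by positivity)
    apply this.congr
    intro n
    ring_nf
  apply tendsto_of_tendsto_of_tendsto_of_le_of_le' hlow hup
  · filter_upwards [eventually_ge_atTop (c+1)] with n hn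
    have hcn : c ≤ n := by omega
    have hc : ((n - c : ℕ):ℝ) = (n:ℝ) - c := by push_cast [hcn]; ring
    have hmod : (n - c) % a < a := Nat.mod_lt _ ha
    have hdm := Nat.div_add_mod (n - c) a
    have haR : (0:ℝ) < (a:ℝ) := by exact_mod_cast ha
    have hnpos : (0:ℝ) < (n:ℝ) := by exact_mod_cast (by omega : 0 < n)
    have hv : ((((n-c)/a : ℕ)):ℝ) = (((n-c:ℕ)):ℝ)/(a:ℝ) - (((n-c) % a : ℕ):ℝ)/(a:ℝ) := by
      have h8 : ((a:ℝ)) * (((n-c)/a : ℕ):ℝ) + (((n-c) % a : ℕ):ℝ) = ((n-c:ℕ):ℝ) := by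
        exact_mod_cast congrArg (fun z : ℕ => (z:ℝ)) hdm
      field_simp
      linarith
    have hb : (((n-c) % a : ℕ):ℝ) ≤ (a:ℝ) := by exact_mod_cast hmod.le
    have h0 : (0:ℝ) ≤ (((n-c) % a : ℕ):ℝ) := by positivity
    rw [hv, hc, div_le_div_iff₀ (by positivity) hnpos]
    have hq : (((n:ℝ) - c)/a - (((n-c) % a : ℕ):ℝ)/a)*((n:ℝ)*a+0)
        = ((n:ℝ) - c - (((n-c) % a : ℕ):ℝ))*(n:ℝ) := by
      field_simp
      ring
    rw [hq]
    nlinarith [hb, hnpos.le]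
  · filter_upwards [eventually_ge_atTop (c+1)] with n hn
    have hcn : c ≤ n := by omega
    have hc : ((n - c : ℕ):ℝ) = (n:ℝ) - c := by push_cast [hcn]; ring
    have hmod : (n - c) % a < a := Nat.mod_lt _ ha
    have hdm := Nat.div_add_mod (n - c) a
    have haR : (0:ℝ) < (a:ℝ) := by exact_mod_cast ha
    have hnpos : (0:ℝ) < (n:ℝ) := by exact_mod_cast (by omega : 0 < n)
    have hv : ((((n-c)/a : ℕ)):ℝ) = (((n-c:ℕ)):ℝ)/(a:ℝ) - (((n-c) % a : ℕ):ℝ)/(a:ℝ) := by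
      have h8 : ((a:ℝ)) * (((n-c)/a : ℕ):ℝ) + (((n-c) % a : ℕ):ℝ) = ((n-c:ℕ):ℝ) := by
        exact_mod_cast congrArg (fun z : ℕ => (z:ℝ)) hdm
      field_simp
      linarith
    have h0 : (0:ℝ) ≤ (((n-c) % a : ℕ):ℝ) := by positivity
    rw [hv, hc, div_le_div_iff₀ hnpos (by positivity)]
    have hq : (((n:ℝ) - c)/a - (((n-c) % a : ℕ):ℝ)/a)*((n:ℝ)*a+0)
        = ((n:ℝ) - c - (((n-c) % a : ℕ):ℝ))*(n:ℝ) := by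
      field_simp
      ring
    rw [hq]
    nlinarith [h0, hnpos.le]

private lemma base_identity (a : ℕ) (ha : 2 ≤ a) :
    (1 - X : PowerSeries ℤ) * (Sd a * Sd (a+1)) = Sd a - X * Sd (a+1) := by
  have e1 := Sd_eq a (by omega)
  have e2 := Sd_eq (a+1) (by omega)
  have hU : ((1 - X^a) * (1 - X^(a+1)) : PowerSeries ℤ) *
      (Sd a * Sd (a+1)) = 1 := by
    rw [mul_mul_mul_comm, e1, e2, one_mul]
  have hUne : ((1 - X^a) * (1 - X^(a+1)) : PowerSeries ℤ) ≠ 0 :=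
    (IsUnit.of_mul_eq_one _ hU).ne_zero
  apply mul_right_cancel₀ hUne
  linear_combination (((1 - X : PowerSeries ℤ)) - (1 - X^(a+1))) * e1 +
    ((1 - X : PowerSeries ℤ) * Sd a * (1 - X^a) + X*(1 - X^a)) * e2

private lemma base_u0 (a : ℕ) (ha : 2 ≤ a) :
    coeff 0 (Sd a * Sd (a+1)) = 1 := by
  have : (constantCoeff) (Sd a * Sd (a+1)) = 1 := by
    rw [map_mul]
    simp [Sd, constantCoeff_mk]
  simpa [coeff_zero_eq_constantCoeff] using this

private lemma base_rec (a : ℕ) (ha : 2 ≤ a) (n : ℕ) (hn : 1 ≤ n) :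
    coeff n (Sd a * Sd (a+1)) - coeff (n-1) (Sd a * Sd (a+1))
      = (if a ∣ n then 1 else 0) - (if (a+1) ∣ (n-1) then 1 else 0) := by
  have h := congrArg (coeff n) (base_identity a ha)
  obtain ⟨m, rfl⟩ : ∃ m, n = m + 1 := ⟨n - 1, by omega⟩
  rw [sub_mul, one_mul, map_sub, coeff_succ_X_mul, map_sub, coeff_succ_X_mul] at h
  simp only [Nat.add_sub_cancel]
  rw [h]
  simp [Sd, coeff_mk]

private lemma base_formula (a : ℕ) (ha : 2 ≤ a) :
    ∀ n : ℕ, 1 ≤ n → coeff n (Sd a * Sd (a+1))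
      = ((n/a : ℕ) : ℤ) - (((n-1)/(a+1) : ℕ) : ℤ) := by
  intro n
  induction n with
  | zero => omega
  | succ n ih =>
    intro _
    rcases Nat.eq_zero_or_pos n with h0 | hpos
    · subst h0
      have h := base_rec a ha 1 le_rfl
      rw [base_u0 a ha] at h
      simp only [Nat.sub_self] at h
      have hd1 : ¬ a ∣ 1 := by
        intro hdvd
        have := Nat.le_of_dvd one_pos hdvd
        omega
      rw [if_neg hd1, if_pos (dvd_zero _)] at h
      have : coeff 1 (Sd a * Sd (a+1)) = 0 := by linarith [h]
      rw [this]
      have h1 : (1:ℕ)/a = 0 := Nat.div_eq_of_lt (by omega)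
      simp [h1]
    · have ihh := ih hpos
      have h := base_rec a ha (n+1) (by omega)
      simp only [Nat.add_sub_cancel] at h
      rw [ihh] at h
      have hsd : coeff (n+1) (Sd a * Sd (a+1))
          = ((n/a : ℕ) : ℤ) - (((n-1)/(a+1) : ℕ) : ℤ)
            + ((if a ∣ (n+1) then 1 else 0) - (if (a+1) ∣ n then 1 else 0)) := by
        linarith [h]
      rw [hsd]
      have hda : ((n+1)/a : ℕ) = n/a + (if a ∣ (n+1) then 1 else 0) := by
        rw [Nat.succ_div]
      have hdb : (n/(a+1) : ℕ) = (n-1)/(a+1) + (if (a+1) ∣ n then 1 else 0) := by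
        obtain ⟨m, rfl⟩ : ∃ m, n = m + 1 := ⟨n - 1, by omega⟩
        simp only [Nat.add_sub_cancel]
        rw [Nat.succ_div]
      simp only [Nat.add_sub_cancel]
      rw [hda, hdb]
      push_cast
      split_ifs <;> ring

private lemma base_tendsto (a : ℕ) (ha : 2 ≤ a) :
    Filter.Tendsto (fun n : ℕ => ((coeff n (Sd a * Sd (a+1)) : ℤ) : ℝ) / (n:ℝ)^1)
      atTop (nhds (1/((a:ℝ)*((a:ℝ)+1)))) := by
  have h1 := natdiv_tendsto a 0 (by omega)
  have h2 := natdiv_tendsto (a+1) 1 (by omega)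
  have h3 := h1.sub h2
  have hval : 1/(a:ℝ) - 1/((a:ℝ)+1) = 1/((a:ℝ)*((a:ℝ)+1)) := by
    have : ((a:ℝ)) ≠ 0 := by positivity
    have : ((a:ℝ)+1) ≠ 0 := by positivity
    field_simp
    ring
  push_cast at h3
  rw [hval] at h3
  apply h3.congr'
  filter_upwards [eventually_ge_atTop 1] with n hn
  show (((n - 0)/a : ℕ):ℝ)/(n:ℝ) - (((n-1)/(a+1) : ℕ):ℝ)/(n:ℝ) = _
  rw [base_formula a ha n hn, pow_one, Nat.sub_zero, Int.cast_sub,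
    Int.cast_natCast, Int.cast_natCast, sub_div]

private lemma Ico_prod_tendsto (s : ℕ) : ∀ k : ℕ,
    Filter.Tendsto (fun n : ℕ =>
        ((coeff n (∏ i ∈ Finset.Ico 2 (k+4), Sd (s+i)) : ℤ) : ℝ)/(n:ℝ)^(k+1))
      atTop
      (nhds (1/(((k+1).factorial : ℝ) * ∏ i ∈ Finset.Ico 2 (k+4), ((s+i : ℕ) : ℝ)))) := by
  intro k
  induction k with
  | zero =>
    have hprodS : (∏ i ∈ Finset.Ico 2 4, Sd (s+i)) = Sd (s+2) * Sd (s+2+1) := by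
      rw [Finset.prod_Ico_succ_top (by omega)]
      rw [show Finset.Ico 2 3 = {2} from rfl]
      rw [Finset.prod_singleton]
    have hprodc : (∏ i ∈ Finset.Ico 2 4, ((s+i : ℕ) : ℝ)) = ((s:ℝ)+2) * ((s:ℝ)+2+1) := by
      rw [Finset.prod_Ico_succ_top (by omega)]
      rw [show Finset.Ico 2 3 = {2} from rfl]
      rw [Finset.prod_singleton]
      push_cast
      ring
    rw [hprodS, hprodc]
    have h := base_tendsto (s+2) (by omega)
    have hc : ((s+2 : ℕ):ℝ) = (s:ℝ)+2 := by push_cast; ring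
    simp only [hc] at h
    simpa using h
  | succ k ih =>
    have hstep := prod_step (C := ∏ i ∈ Finset.Ico 2 (k+4), Sd (s+i)) (m := k+1)
      (s+(k+4)) (by omega) ih
    have hprodS : Sd (s+(k+4)) * (∏ i ∈ Finset.Ico 2 (k+4), Sd (s+i))
        = ∏ i ∈ Finset.Ico 2 (k+1+4), Sd (s+i) := by
      rw [mul_comm, show k+1+4 = (k+4)+1 by omega]
      exact (Finset.prod_Ico_succ_top (by omega) _).symm
    rw [hprodS] at hstep
    convert hstep using 2
    have hP5 : (∏ i ∈ Finset.Ico 2 (k+1+4), ((s+i : ℕ):ℝ))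
        = (∏ i ∈ Finset.Ico 2 (k+4), ((s+i : ℕ):ℝ)) * ((s+(k+4) : ℕ):ℝ) := by
      rw [show k+1+4 = (k+4)+1 by omega]
      exact Finset.prod_Ico_succ_top (by omega) _
    rw [hP5]
    have hfac : ((k+1+1).factorial : ℝ) = ((k+2 : ℕ):ℝ) * ((k+1).factorial : ℝ) := by
      rw [Nat.factorial_succ]
      push_cast
      ring
    rw [hfac]
    have hfne : (((k+1).factorial : ℝ)) ≠ 0 := by positivity
    have hPne : (∏ i ∈ Finset.Ico 2 (k+4), ((s+i:ℕ):ℝ)) ≠ 0 := by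
      apply ne_of_gt
      apply Finset.prod_pos
      intro i hi
      have : 0 < s + i := by
        simp only [Finset.mem_Ico] at hi
        omega
      exact_mod_cast this
    have hsne : ((s+(k+4) : ℕ):ℝ) ≠ 0 := by
      have : 0 < s+(k+4) := by omega
      positivity
    field_simp
    push_cast
    ring

private lemma shift_div_tendsto (f : ℕ → ℝ) (m : ℕ) (α : ℝ) (c e : ℕ)
    (hf : Filter.Tendsto (fun n : ℕ => f n / (n:ℝ)^m) atTop (nhds α)) :
    Filter.Tendsto (fun n : ℕ => f (n - c + e) / (n:ℝ)^m) atTop (nhds α) := by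
  have hcomp : Filter.Tendsto (fun n : ℕ => n - c + e) atTop atTop := by
    refine Filter.tendsto_atTop.2 fun b => Filter.eventually_atTop.2 ⟨b + c, fun n hn => by omega⟩
  have h1 := hf.comp hcomp
  have hrat : Filter.Tendsto (fun n : ℕ => (((n - c + e : ℕ):ℝ)/(n:ℝ))^m) atTop
      (nhds 1) := by
    have hr0 : Filter.Tendsto (fun n : ℕ => ((n:ℝ)*1 + ((e:ℝ)-(c:ℝ)))/((n:ℝ)*1+0)) atTop
        (nhds ((1:ℝ)/1)) := ratio_tendsto 1 ((e:ℝ)-(c:ℝ)) 1 0 one_ne_zero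
    rw [div_one] at hr0
    have hr1 : Filter.Tendsto (fun n : ℕ => ((n - c + e : ℕ):ℝ)/(n:ℝ)) atTop (nhds 1) := by
      apply hr0.congr'
      filter_upwards [eventually_ge_atTop c] with n hn
      have : ((n - c + e : ℕ):ℝ) = (n:ℝ) - c + e := by push_cast [hn]; ring
      rw [this]
      ring_nf
    simpa using hr1.pow m
  have h2 := h1.mul hrat
  rw [mul_one] at h2
  apply h2.congr'
  filter_upwards [eventually_ge_atTop (c+1)] with n hn
  have hM : (((n - c + e : ℕ)):ℝ) ≠ 0 := by
    have : 0 < n - c + e := by omega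
    positivity
  show f (n - c + e) / ((n - c + e : ℕ):ℝ)^m * (((n - c + e : ℕ):ℝ)/(n:ℝ))^m
      = f (n - c + e) / (n:ℝ)^m
  rw [div_pow, div_mul_div_comm, mul_comm (f _), mul_div_mul_left _ _ (pow_ne_zero m hM)]

private lemma pf_identity (s : ℕ) (hs : 1 ≤ s) (A : PowerSeries ℤ) :
    X^s * ((1 - X) * (Sd s * (Sd (s+1) * A))) = Sd s * A - Sd (s+1) * A := by
  have e1 := Sd_eq s hs
  have e2 := Sd_eq (s+1) (by omega)
  have e : X^s * ((1 - X) * (Sd s * Sd (s+1))) = Sd s - Sd (s+1) := by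
    have hU : ((1 - X^s) * (1 - X^(s+1)) : PowerSeries ℤ) * (Sd s * Sd (s+1)) = 1 := by
      rw [mul_mul_mul_comm, e1, e2, one_mul]
    have hUne : ((1 - X^s) * (1 - X^(s+1)) : PowerSeries ℤ) ≠ 0 :=
      (IsUnit.of_mul_eq_one _ hU).ne_zero
    apply mul_right_cancel₀ hUne
    linear_combination (X^s*(1-(X:PowerSeries ℤ))*((1-X^(s+1))*Sd (s+1)) - (1-X^(s+1))) * e1
      + (X^s*(1-(X:PowerSeries ℤ)) + (1-X^s)) * e2
  linear_combination A * e

private lemma delta_coeff (s : ℕ) (hs : 1 ≤ s) (A : PowerSeries ℤ) (m : ℕ) (hm : 1 ≤ m) :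
    ((coeff m (Sd s * (Sd (s+1) * A)) : ℤ):ℝ)
      - ((coeff (m-1) (Sd s * (Sd (s+1) * A)) : ℤ):ℝ)
    = ((coeff (m+s) (Sd s * A) : ℤ):ℝ) - ((coeff (m+s) (Sd (s+1) * A) : ℤ):ℝ) := by
  have h := congrArg (coeff (m + s)) (pf_identity s hs A)
  rw [coeff_X_pow_mul, map_sub] at h
  obtain ⟨t, rfl⟩ : ∃ t, m = t + 1 := ⟨m-1, by omega⟩
  rw [sub_mul, one_mul, map_sub, coeff_succ_X_mul] at h
  simp only [Nat.add_sub_cancel]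
  exact_mod_cast h

/-- With `E = q^r(1 − q^{k₁})/(q^s;q)_{L+1}` and `D = (1 − q^{k₂})/(q^s;q)_{L+1}` in
ℤ[[q]] (characterized by the hypotheses `hE` and `hD`, since `(q^s;q)_{L+1}` has
constant term 1, hence is invertible), one has
`e_{k₁,r}(n) − d_{k₂}(n) ~ (k₁−k₂)·n^{L−1}/((L−1)!·s·(s+1)···(s+L))` as `n → ∞`,
where `s·(s+1)···(s+L) = ∏_{i=0}^{L} (s+i)`. -/
theorem stmt_19 (s L r k₁ k₂ : ℕ) (hs : 1 ≤ s) (hL : 3 ≤ L)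
    (hk₂ : 1 ≤ k₂) (hk : k₂ < k₁)
    (E D : PowerSeries ℤ)
    (hE : E * ∏ i ∈ Finset.range (L + 1), (1 - (X : PowerSeries ℤ) ^ (s + i))
        = X ^ r * (1 - X ^ k₁))
    (hD : D * ∏ i ∈ Finset.range (L + 1), (1 - (X : PowerSeries ℤ) ^ (s + i))
        = 1 - X ^ k₂) :
    Filter.Tendsto
      (fun n : ℕ =>
        ((coeff n E : ℤ) - (coeff n D : ℤ) : ℝ) *
          (((L - 1).factorial * ∏ i ∈ Finset.range (L + 1), (s + i) : ℕ) : ℝ) /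
          (((k₁ : ℝ) - (k₂ : ℝ)) * (n : ℝ) ^ (L - 1)))
      Filter.atTop (nhds 1) := by
  obtain ⟨k, rfl⟩ : ∃ k, L = k + 3 := ⟨L - 3, by omega⟩
  have hexp : k + 3 - 1 = k + 1 + 1 := by omega
  have hrange : k + 3 + 1 = k + 4 := by omega
  simp only [hexp, hrange] at *
  set A : PowerSeries ℤ := ∏ i ∈ Finset.Ico 2 (k+4), Sd (s+i) with hAdef
  set QS : PowerSeries ℤ := Sd s * (Sd (s+1) * A) with hQSdef
  set q : ℕ → ℝ := fun n => ((coeff n QS : ℤ) : ℝ) with hqdef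
  -- QS is the inverse of the q-Pochhammer product
  have hQ1 : (∏ i ∈ Finset.range (k+4), (1 - (X : PowerSeries ℤ)^(s+i))) *
      (∏ i ∈ Finset.range (k+4), Sd (s+i)) = 1 := by
    rw [← Finset.prod_mul_distrib]
    rw [Finset.prod_congr rfl (fun i _ => Sd_eq (s+i) (by omega))]
    exact Finset.prod_const_one
  have hprodQS : (∏ i ∈ Finset.range (k+4), Sd (s+i)) = QS := by
    rw [hQSdef, hAdef, Finset.range_eq_Ico,
      ← Finset.prod_Ico_consecutive _ (show (0:ℕ) ≤ 2 by omega) (show 2 ≤ k+4 by omega),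
      show Finset.Ico 0 2 = ({0, 1} : Finset ℕ) from rfl,
      Finset.prod_pair (by omega)]
    rw [Nat.add_zero, mul_assoc]
  have hED : E - D = (X^r * (1 - X^k₁) - (1 - X^k₂)) * QS := by
    have h1 : (E - D) * (∏ i ∈ Finset.range (k+4), (1 - (X:PowerSeries ℤ)^(s+i)))
        = X^r * (1 - X^k₁) - (1 - X^k₂) := by rw [sub_mul, hE, hD]
    calc E - D = (E - D) * ((∏ i ∈ Finset.range (k+4), (1 - (X:PowerSeries ℤ)^(s+i))) *
          (∏ i ∈ Finset.range (k+4), Sd (s+i))) := by rw [hQ1, mul_one]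
      _ = ((E - D) * (∏ i ∈ Finset.range (k+4), (1 - (X:PowerSeries ℤ)^(s+i)))) *
          (∏ i ∈ Finset.range (k+4), Sd (s+i)) := by ring
      _ = (X^r * (1 - X^k₁) - (1 - X^k₂)) * QS := by rw [h1, hprodQS]
  -- coefficient formula for large n
  have hcoeff : ∀ n : ℕ, r + k₁ + k₂ + 1 ≤ n →
      ((coeff n E : ℤ) : ℝ) - ((coeff n D : ℤ) : ℝ)
        = (q (n - r) - q (n - (r + k₁))) - (q n - q (n - k₂)) := by
    intro n hn
    have h0 : coeff n (E - D)
        = (coeff (n - r) QS + coeff (n - k₂) QS)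
          - (coeff (n - (r + k₁)) QS + coeff n QS) := by
      rw [hED]
      have hexp2 : (X^r * (1 - X^k₁) - (1 - X^k₂)) * QS
          = (X^r * QS + X^k₂ * QS) - (X^(r+k₁) * QS + QS) := by ring
      rw [hexp2, map_sub, map_add, map_add, coeff_X_pow_mul', coeff_X_pow_mul',
        coeff_X_pow_mul', if_pos (by omega : r ≤ n), if_pos (by omega : k₂ ≤ n),
        if_pos (by omega : r + k₁ ≤ n)]
    rw [map_sub] at h0
    have := congrArg (fun z : ℤ => (z : ℝ)) h0
    push_cast at this
    rw [hqdef]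
    simp only []
    linarith [this]
  -- asymptotics
  set PIco : ℝ := ∏ i ∈ Finset.Ico 2 (k+4), ((s+i : ℕ) : ℝ) with hPIco
  have hAlim := Ico_prod_tendsto s k
  have hpa := prod_step (C := A) (m := k+1) s (by omega) hAlim
  have hpb := prod_step (C := A) (m := k+1) (s+1) (by omega) hAlim
  set αA : ℝ := 1/(((k+1).factorial : ℝ) * PIco) with hαA
  set cstar : ℝ := αA/(((k+1:ℕ)+1 : ℝ)*(s:ℝ)) - αA/(((k+1:ℕ)+1 : ℝ)*((s+1:ℕ):ℝ)) with hcstar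
  have hdel : ∀ c : ℕ, Filter.Tendsto
      (fun n : ℕ => (q (n - c) - q (n - c - 1))/(n:ℝ)^(k+1+1)) atTop (nhds cstar) := by
    intro c
    have h1 := shift_div_tendsto (fun M => ((coeff M (Sd s * A) : ℤ):ℝ)) (k+1+1) _ c s hpa
    have h2 := shift_div_tendsto (fun M => ((coeff M (Sd (s+1) * A) : ℤ):ℝ)) (k+1+1) _ c s hpb
    have h3 := h1.sub h2
    apply h3.congr'
    filter_upwards [eventually_ge_atTop (c+1)] with n hn
    show _ - _ = _
    rw [div_sub_div_same]
    congr 1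
    have hdc := delta_coeff s hs A (n - c) (by omega)
    rw [hqdef]
    simp only []
    rw [hdc]
  -- sums of deltas
  have hbig := (Filter.Tendsto.sub
    (tendsto_finset_sum (Finset.range k₁) (fun j _ => hdel (r+j)))
    (tendsto_finset_sum (Finset.range k₂) (fun j _ => hdel j)))
  rw [Finset.sum_const, Finset.sum_const, Finset.card_range, Finset.card_range,
    nsmul_eq_mul, nsmul_eq_mul] at hbig
  -- final constant
  set Mr : ℝ := (((k+1+1).factorial * ∏ i ∈ Finset.range (k+4), (s + i) : ℕ) : ℝ) with hMr
  set K : ℝ := (k₁ : ℝ) - (k₂ : ℝ) with hK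
  have hKpos : 0 < K := by
    rw [hK]
    have : (k₂:ℝ) < (k₁:ℝ) := by exact_mod_cast hk
    linarith
  have hfin := hbig.mul_const (Mr / K)
  have hval : ((k₁:ℝ) * cstar - (k₂:ℝ) * cstar) * (Mr / K) = 1 := by
    have hPpos : (0:ℝ) < PIco := by
      rw [hPIco]
      apply Finset.prod_pos
      intro i hi
      have : 0 < s + i := by omega
      exact_mod_cast this
    have hMval : Mr = (((k+1+1).factorial : ℕ) : ℝ) * ((s:ℝ) * ((s+1:ℕ):ℝ) * PIco) := by
      rw [hMr, hPIco]
      push_cast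
      rw [show (∏ i ∈ Finset.range (k+4), ((s:ℝ) + (i:ℝ)))
          = ((s:ℝ)+0) * ((s:ℝ)+1) * ∏ i ∈ Finset.Ico 2 (k+4), ((s:ℝ)+(i:ℝ)) from ?_]
      · norm_num
      · rw [Finset.range_eq_Ico,
          ← Finset.prod_Ico_consecutive _ (show (0:ℕ) ≤ 2 by omega) (show 2 ≤ k+4 by omega),
          show Finset.Ico 0 2 = ({0, 1} : Finset ℕ) from rfl,
          Finset.prod_pair (by omega)]
        push_cast
        ring
    have hfac2 : (((k+1+1).factorial : ℕ) : ℝ) = (((k+1)+1 : ℕ):ℝ) * (((k+1).factorial : ℕ):ℝ) := by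
      rw [Nat.factorial_succ]
      push_cast
      ring
    rw [hcstar, hαA, hMval, hfac2]
    have h1 : ((k+1).factorial : ℝ) ≠ 0 := by positivity
    have h2 : PIco ≠ 0 := ne_of_gt hPpos
    have h3 : (s:ℝ) ≠ 0 := by positivity
    have h4 : ((s+1:ℕ):ℝ) ≠ 0 := by positivity
    have h5 : (((k+1)+1:ℕ):ℝ) ≠ 0 := by positivity
    have h6 : K ≠ 0 := ne_of_gt hKpos
    have h7 : ((k₁:ℝ) - (k₂:ℝ)) = K := rfl
    field_simp
    push_cast
    ring
  rw [hval] at hfin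
  apply hfin.congr'
  filter_upwards [eventually_ge_atTop (r + k₁ + k₂ + 1)] with n hn
  have hc := hcoeff n hn
  -- telescoping
  have htel1 : q (n - r) - q (n - (r + k₁))
      = ∑ j ∈ Finset.range k₁, (q (n - (r+j)) - q (n - (r+j) - 1)) := by
    have hts := Finset.sum_range_sub' (fun j => q (n - (r+j))) k₁
    calc q (n - r) - q (n - (r + k₁))
        = q (n - (r+0)) - q (n - (r + k₁)) := by norm_num
      _ = ∑ j ∈ Finset.range k₁, (q (n - (r+j)) - q (n - (r+(j+1)))) := hts.symm
      _ = _ := Finset.sum_congr rfl (fun j _ => by congr 2 <;> try omega)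
  have htel2 : q n - q (n - k₂)
      = ∑ j ∈ Finset.range k₂, (q (n - j) - q (n - j - 1)) := by
    have hts := Finset.sum_range_sub' (fun j => q (n - j)) k₂
    calc q n - q (n - k₂)
        = q (n - 0) - q (n - k₂) := by norm_num
      _ = ∑ j ∈ Finset.range k₂, (q (n - j) - q (n - (j+1))) := hts.symm
      _ = _ := Finset.sum_congr rfl (fun j _ => by congr 2 <;> try omega)
  show (∑ j ∈ Finset.range k₁, (q (n - (r+j)) - q (n - (r+j) - 1))/(n:ℝ)^(k+1+1)
      - ∑ j ∈ Finset.range k₂, (q (n - j) - q (n - j - 1))/(n:ℝ)^(k+1+1)) * (Mr / K) = _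
  rw [← Finset.sum_div, ← Finset.sum_div, ← htel1, ← htel2, div_sub_div_same,
    div_mul_div_comm, ← hc, mul_comm ((n:ℝ)^(k+1+1)) K]
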